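/- arXiv:2512.06832 — 5 statements merged into one kernel-verified Lean document; each statement's English description precedes it below -/
import Mathlib

section
/- In a linear and complete residuated lattice L, for any ε, x, y, z ∈ L: x ≤_ε (y →_ε z) if and only if x ⊗_ε y ≤_ε z, where x ≤_ε y means (x ≤ y or x ≤ ε), x ⊗_ε y is defined as x ⊗ y if x ⊗ y > ε and ε otherwise, and (y →_ε z) is defined as (y ∨ ε) → (z ∨ ε). -/
/-- A linear and complete residuated lattice: a complete linear order carrying a
commutative monoid structure whose unit `1` is the greatest element, together with a
residuum satisfying the adjunction property. -/
class ResiduatedLattice (L : Type*) extends CompleteLinearOrder L, CommMonoid L where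
  res : L → L → L
  adjunction : ∀ x y z : L, x * y ≤ z ↔ x ≤ res y z
  one_eq_top : (1 : L) = ⊤

variable {L : Type*} [ResiduatedLattice L]

/-- `x ≤_ε y` iff `x ≤ y` or `x ≤ ε`. -/
def leE (ε x y : L) : Prop := x ≤ y ∨ x ≤ ε

/-- `x ⊗_ε y` is `x ⊗ y` if `x ⊗ y > ε`, and `ε` otherwise. -/
def mulE (ε x y : L) : L := if ε < x * y then x * y else ε

/-- `x →_ε y := (x ∨ ε) → (y ∨ ε)`. -/
def resE (ε x y : L) : L := ResiduatedLattice.res (x ⊔ ε) (y ⊔ ε)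

/-!
In a chain, `x ≤_ε y` is just `x ≤ y ∨ ε` and `x ⊗_ε y = x ⊗ y ∨ ε`. Since
`ε ⊗ (y ∨ ε) ≤ ε`, the adjunction gives `ε ≤ y →_ε z`, so the left-hand side becomes
`x ⊗ (y ∨ ε) ≤ z ∨ ε`. Multiplication is monotone, hence distributes over `∨` in a chain,
and `x ⊗ ε ≤ ε`; so both sides reduce to `x ⊗ y ≤ z ∨ ε`.
-/

namespace ResiduatedLattice

instance : IsOrderedMonoid L where
  mul_le_mul_left a b hab c :=
    (adjunction a c (b * c)).mpr <| hab.trans <| (adjunction b c (b * c)).mp le_rfl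

theorem le_one (a : L) : a ≤ 1 :=
  one_eq_top (L := L) ▸ le_top

theorem mul_le_left (a b : L) : a * b ≤ a :=
  mul_le_of_le_one_right' (le_one b)

theorem mul_le_right (a b : L) : a * b ≤ b :=
  mul_le_of_le_one_left' (le_one a)

theorem mul_sup (a b c : L) : a * (b ⊔ c) = a * b ⊔ a * c :=
  (monotone_id.const_mul' a).map_max

end ResiduatedLattice

open ResiduatedLattice

theorem leE_iff_le_sup (ε x y : L) : leE ε x y ↔ x ≤ y ⊔ ε :=
  le_sup_iff.symm

theorem mulE_eq_mul_sup (ε x y : L) : mulE ε x y = x * y ⊔ ε := by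
  unfold mulE
  split_ifs with h
  · exact (sup_eq_left.mpr h.le).symm
  · exact (sup_eq_right.mpr (not_lt.mp h)).symm

theorem le_resE_iff (ε x y z : L) : x ≤ resE ε y z ↔ x * y ≤ z ⊔ ε := by
  rw [resE, ← adjunction, ResiduatedLattice.mul_sup, sup_le_iff,
    and_iff_left ((mul_le_right x ε).trans le_sup_right)]

theorem le_resE (ε y z : L) : ε ≤ resE ε y z :=
  (le_resE_iff ε ε y z).mpr ((mul_le_left ε y).trans le_sup_right)

theorem stmt_0 (ε x y z : L) :
    leE ε x (resE ε y z) ↔ leE ε (mulE ε x y) z := by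
  rw [leE_iff_le_sup, leE_iff_le_sup, sup_eq_left.mpr (le_resE ε y z), le_resE_iff,
    mulE_eq_mul_sup, sup_le_iff, and_iff_left le_sup_right]
end

section
/- For the product structure on [0,1] (with x ⊗ y = xy), the ε-approximate monoid is ⊗-locally finite for every ε ∈ (0,1): the submonoid of ([0,1], ⊗_ε, 1) generated by any finite set is finite, where x ⊗_ε y := xy if xy > ε and ε otherwise. -/
/-!
Every element of the `ε`-approximate monoid generated by `S` is either `ε` itself or an ordinary
product of elements of `S \ {1}`, and such a product of at least two factors exceeds `ε`. All
elements of `S \ {1}` lie below some `c < 1`, so a product of `n` of them is at most `c ^ n`,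
which drops below `ε > 0` once `n` is large. Hence only boundedly many factors ever occur, and
a finite set has finitely many products of boundedly many factors.
-/

open unitInterval

open scoped Pointwise

/-- The `ε`-approximate product t-norm on `[0,1]`: `x ⊗_ε y = x·y` if `x·y > ε`, else `ε`. -/
noncomputable def prodMulE (ε x y : unitInterval) : unitInterval :=
  if ε < x * y then x * y else ε

/-- The submonoid of `([0,1], ⊗_ε, 1)` generated by a set `S`: the closure of `S ∪ {1}`
under `⊗_ε`. -/
inductive genE (ε : unitInterval) (S : Set unitInterval) : unitInterval → Prop
  | one : genE ε S 1
  | mem {x} : x ∈ S → genE ε S x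
  | mul {x y} : genE ε S x → genE ε S y → genE ε S (prodMulE ε x y)

theorem Set.Finite.pow {M : Type*} [Monoid M] {s : Set M} (hs : s.Finite) (n : ℕ) :
    (s ^ n).Finite := by
  induction n with
  | zero => simp
  | succ n ih => simpa only [pow_succ] using ih.mul hs

theorem Set.pow_subset_Iic_pow {M : Type*} [Monoid M] [Preorder M] [MulLeftMono M]
    [MulRightMono M] {s : Set M} {c : M} (hs : s ⊆ Set.Iic c) (n : ℕ) :
    s ^ n ⊆ Set.Iic (c ^ n) := by
  induction n with
  | zero => simp
  | succ n ih =>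
    rw [pow_succ, pow_succ]
    exact (Set.mul_subset_mul ih hs).trans (Set.Iic_mul_Iic_subset' _ _)

theorem Set.Finite.exists_lt_subset_Iic {α : Type*} [LinearOrder α] [OrderBot α] {s : Set α}
    (hs : s.Finite) {a : α} (ha : ⊥ < a) (h : ∀ x ∈ s, x < a) : ∃ c < a, s ⊆ Set.Iic c :=
  ⟨hs.toFinset.sup id, (Finset.sup_lt_iff ha).2 (by simpa using h),
    fun _ hx => Finset.le_sup (f := id) (hs.mem_toFinset.2 hx)⟩

section prodMulE

variable {ε x y : I}

theorem prodMulE_of_lt (h : ε < x * y) : prodMulE ε x y = x * y := if_pos h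

theorem prodMulE_of_not_lt (h : ¬ε < x * y) : prodMulE ε x y = ε := if_neg h

theorem unitInterval.ne_of_lt_mul (h : ε < x * y) : x ≠ ε := by
  rintro rfl
  exact (h.trans_le mul_le_left).false

end prodMulE

theorem genE.eq_or_mem_pow {ε x : I} {S : Set I} (hx : genE ε S x) :
    x = ε ∨ ∃ n, x ∈ (S \ {1}) ^ n ∧ (n ≤ 1 ∨ ε < x) := by
  induction hx with
  | one => exact .inr ⟨0, by simp⟩
  | @mem x hxS =>
    right
    by_cases hx1 : x = 1
    · exact ⟨0, by simp [hx1]⟩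
    · exact ⟨1, by simp [hxS, hx1]⟩
  | @mul x y _ _ ihx ihy =>
    by_cases hxy : ε < x * y
    · obtain ⟨m, hxm, -⟩ := ihx.resolve_left (ne_of_lt_mul hxy)
      obtain ⟨n, hyn, -⟩ := ihy.resolve_left (ne_of_lt_mul (mul_comm x y ▸ hxy))
      rw [prodMulE_of_lt hxy]
      exact .inr ⟨m + n, pow_add (S \ {1}) m n ▸ Set.mul_mem_mul hxm hyn, .inr hxy⟩
    · exact .inl (prodMulE_of_not_lt hxy)

theorem unitInterval.exists_pow_lt_of_lt_one {ε c : I} (h0 : 0 < ε) (hc : c < 1) :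
    ∃ N : ℕ, c ^ N < ε := by
  obtain ⟨N, hN⟩ :=
    _root_.exists_pow_lt_of_lt_one (Subtype.coe_lt_coe.2 h0) (Subtype.coe_lt_coe.2 hc)
  exact ⟨N, Subtype.coe_lt_coe.1 (by rwa [Set.Icc.coe_pow])⟩

theorem stmt_3_general (ε : unitInterval) (h0 : 0 < ε)
    (S : Set unitInterval) (hS : S.Finite) :
    {x | genE ε S x}.Finite := by
  have hT : (S \ {1}).Finite := hS.sdiff
  obtain ⟨c, hc1, hc⟩ := hT.exists_lt_subset_Iic zero_lt_one
    fun x hx => lt_of_le_of_ne le_one' hx.2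
  obtain ⟨N, hN⟩ := unitInterval.exists_pow_lt_of_lt_one h0 hc1
  refine (((Set.finite_Iic (N + 1)).biUnion fun n _ => hT.pow n).insert ε).subset ?_
  intro x hx
  rcases genE.eq_or_mem_pow hx with rfl | ⟨n, hxn, hn⟩
  · exact Set.mem_insert _ _
  refine Set.mem_insert_of_mem _ (Set.mem_biUnion (Set.mem_Iic.2 ?_) hxn)
  rcases hn with hn | hεx
  · omega
  by_contra! hNn
  have hcn : c ^ n ≤ c ^ N := pow_le_pow_right_of_le_one' le_one' (by omega)
  exact (hεx.trans_le ((Set.pow_subset_Iic_pow hc n hxn).trans hcn)).not_gt hN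

/-- For the product structure on `[0,1]`, the `ε`-approximate monoid is `⊗`-locally finite
for every `ε ∈ (0,1)`: the submonoid of `([0,1], ⊗_ε, 1)` generated by any finite set is
finite. -/
theorem stmt_3 (ε : unitInterval) (h0 : 0 < ε) (h1 : ε < 1)
    (S : Set unitInterval) (hS : S.Finite) :
    {x | genE ε S x}.Finite :=
  stmt_3_general ε h0 S hS
end

section
/- Let f, g be fuzzy subsets of X and r a fuzzy relation on X over a linear complete residuated lattice, and ε ∈ L. If f =_ε g pointwise, then f ∘_ε r =_ε g ∘_ε r and r ∘_ε f =_ε r ∘_ε g. -/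
variable {L : Type*} [ResiduatedLattice L]

/-- `x =_ε y` iff `x ≤_ε y` and `y ≤_ε x`. -/
def eqE (ε x y : L) : Prop := leE ε x y ∧ leE ε y x

/-- `(f ∘_ε r)(a) = ⋁_ε { f(b) ⊗_ε r(b,a) : b ∈ X }`. -/
noncomputable def vecRelCompE {X : Type*} (ε : L) (f : X → L) (r : X → X → L) : X → L :=
  fun a => (⨆ b, mulE ε (f b) (r b a)) ⊔ ε

/-- `(r ∘_ε f)(a) = ⋁_ε { r(a,b) ⊗_ε f(b) : b ∈ X }`. -/
noncomputable def relVecCompE {X : Type*} (ε : L) (r : X → X → L) (f : X → L) : X → L :=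
  fun a => (⨆ b, mulE ε (r a b) (f b)) ⊔ ε

/-! In a linear order `x ⊗_ε y = (x ⊗ y) ∨ ε`, so `⊗_ε` is monotone with respect to `≤_ε`:
if `x ≤ ε` then already `x ⊗ z ≤ x ≤ ε`. Taking suprema, `f ∘_ε r` is monotone in `f` with
respect to pointwise `≤_ε`, and `=_ε` is `≤_ε` in both directions. The composition `r ∘_ε f`
is `f ∘_ε r` for the transposed relation, since `⊗_ε` is commutative. -/

namespace ResiduatedLattice

theorem mul_le_mul_of_le_left {x y : L} (h : x ≤ y) (z : L) : x * z ≤ y * z :=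
  (adjunction x z _).2 (h.trans ((adjunction y z _).1 le_rfl))

theorem mul_le_left_s8 (x y : L) : x * y ≤ x :=
  calc x * y = y * x := mul_comm x y
    _ ≤ 1 * x := mul_le_mul_of_le_left (one_eq_top (L := L) ▸ le_top) x
    _ = x := one_mul x

end ResiduatedLattice

open ResiduatedLattice

theorem mulE_comm (ε x y : L) : mulE ε x y = mulE ε y x := by
  simp only [mulE, mul_comm]

theorem mulE_le_mulE_of_leE {ε x y : L} (h : leE ε x y) (z : L) :
    mulE ε x z ≤ mulE ε y z := by
  rw [mulE_eq_mul_sup, mulE_eq_mul_sup]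
  rcases h with hxy | hxε
  · exact sup_le_sup_right (mul_le_mul_of_le_left hxy z) ε
  · exact sup_le ((mul_le_left_s8 x z).trans (hxε.trans le_sup_right)) le_sup_right

theorem vecRelCompE_le_of_leE {X : Type*} {ε : L} {f g : X → L}
    (h : ∀ b, leE ε (f b) (g b)) (r : X → X → L) (a : X) :
    vecRelCompE ε f r a ≤ vecRelCompE ε g r a :=
  sup_le_sup_right (iSup_mono fun b => mulE_le_mulE_of_leE (h b) (r b a)) ε

theorem eqE_vecRelCompE {X : Type*} {ε : L} {f g : X → L} (h : ∀ b, eqE ε (f b) (g b))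
    (r : X → X → L) (a : X) : eqE ε (vecRelCompE ε f r a) (vecRelCompE ε g r a) :=
  ⟨Or.inl (vecRelCompE_le_of_leE (fun b => (h b).1) r a),
    Or.inl (vecRelCompE_le_of_leE (fun b => (h b).2) r a)⟩

theorem relVecCompE_eq_vecRelCompE_flip {X : Type*} (ε : L) (r : X → X → L) (f : X → L) :
    relVecCompE ε r f = vecRelCompE ε f (flip r) := by
  funext a
  simp only [relVecCompE, vecRelCompE, flip, mulE_comm]

theorem stmt_8 {X : Type*} (ε : L) (f g : X → L) (r : X → X → L)
    (h : ∀ a, eqE ε (f a) (g a)) :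
    (∀ a, eqE ε (vecRelCompE ε f r a) (vecRelCompE ε g r a)) ∧
    (∀ a, eqE ε (relVecCompE ε r f a) (relVecCompE ε r g a)) := by
  refine ⟨eqE_vecRelCompE h r, fun a => ?_⟩
  simpa only [relVecCompE_eq_vecRelCompE_flip] using eqE_vecRelCompE h (flip r) a
end

section
/- Let Z be an ε-FPO on a set Q over a linear complete residuated lattice. For any p, q ∈ Q, the aftersets Z_p and Z_q are equal (Z(p,·) = Z(q,·)) if and only if the foresets Z^p and Z^q are equal (Z(·,p) = Z(·,q)). -/
variable {L : Type*} [ResiduatedLattice L]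

/-- Composition of fuzzy relations: `(r ∘ s)(a,b) = sup_c r(a,c) ⊗ s(c,b)`. -/
noncomputable def relComp {X : Type*} (r s : X → X → L) : X → X → L :=
  fun a b => ⨆ c, r a c * s c b

/-- `ε`-composition of fuzzy relations:
`(r ∘_ε s)(a,b) = ⋁_ε { r(a,c) ⊗_ε s(c,b) : c ∈ X }`. -/
noncomputable def relCompE {X : Type*} (ε : L) (r s : X → X → L) : X → X → L :=
  fun a b => (⨆ c, mulE ε (r a c) (s c b)) ⊔ ε

/-- The `ε`-truncation of a fuzzy relation. -/
def truncRel {X : Type*} (ε : L) (r : X → X → L) : X → X → L :=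
  fun a b => if ε < r a b then r a b else ε

/-- A fuzzy `ε`-pre-order (`ε`-FPO) on `X`: a fuzzy relation that is reflexive,
`ε`-transitive, and equal to its own `ε`-truncation. -/
def IsEFPO {X : Type*} (ε : L) (r : X → X → L) : Prop :=
  (∀ x, r x x = 1) ∧
  (∀ a b, leE ε (relCompE ε r r a b) (r a b)) ∧
  truncRel ε r = r

/-!
Truncation forces `ε ≤ Z a b` everywhere, so ε-transitivity collapses to plain
`⊗`-transitivity `Z a b ⊗ Z b c ≤ Z a c`. Equal aftersets (or foresets) give
`Z p q = Z q p = 1` by reflexivity, and a transition of degree `1` can be composed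
with any other without loss, in both directions.
-/

theorem le_mulE (ε x y : L) : x * y ≤ mulE ε x y := by
  unfold mulE
  split_ifs with h
  · exact le_rfl
  · exact not_lt.mp h

theorem le_of_leE {ε x y : L} (h : leE ε x y) (hy : ε ≤ y) : x ≤ y :=
  h.elim id (·.trans hy)

namespace IsEFPO

variable {Q : Type*} {ε : L} {Z : Q → Q → L}

theorem eps_le (h : IsEFPO ε Z) (a b : Q) : ε ≤ Z a b := by
  rw [← h.2.2]
  unfold truncRel
  split_ifs with hlt
  · exact hlt.le
  · exact le_rfl

theorem mul_le (h : IsEFPO ε Z) (a b c : Q) : Z a b * Z b c ≤ Z a c :=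
  calc Z a b * Z b c ≤ mulE ε (Z a b) (Z b c) := le_mulE ε _ _
    _ ≤ ⨆ d, mulE ε (Z a d) (Z d c) := le_iSup (fun d => mulE ε (Z a d) (Z d c)) b
    _ ≤ relCompE ε Z Z a c := le_sup_left
    _ ≤ Z a c := le_of_leE (h.2.1 a c) (h.eps_le a c)

theorem foreset_le (h : IsEFPO ε Z) {a b : Q} (hab : Z a b = 1) (s : Q) :
    Z s a ≤ Z s b := by
  simpa [hab] using h.mul_le s a b

theorem afterset_le (h : IsEFPO ε Z) {a b : Q} (hab : Z a b = 1) (s : Q) :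
    Z b s ≤ Z a s := by
  simpa [hab] using h.mul_le a b s

theorem foreset_eq (h : IsEFPO ε Z) {p q : Q} (hpq : Z p q = 1) (hqp : Z q p = 1)
    (s : Q) : Z s p = Z s q :=
  le_antisymm (h.foreset_le hpq s) (h.foreset_le hqp s)

theorem afterset_eq (h : IsEFPO ε Z) {p q : Q} (hpq : Z p q = 1) (hqp : Z q p = 1)
    (s : Q) : Z p s = Z q s :=
  le_antisymm (h.afterset_le hqp s) (h.afterset_le hpq s)

end IsEFPO

theorem stmt_14 {Q : Type*} (ε : L) (Z : Q → Q → L) (h : IsEFPO ε Z) (p q : Q) :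
    (∀ s, Z p s = Z q s) ↔ (∀ s, Z s p = Z s q) :=
  ⟨fun ha => h.foreset_eq (by rw [ha q, h.1 q]) (by rw [← ha p, h.1 p]),
    fun hf => h.afterset_eq (by rw [← hf p, h.1 p]) (by rw [hf q, h.1 q])⟩
end

section
/- Let Z be a reflexive fuzzy relation on the state set Q of a fuzzy automaton A over a linear complete residuated lattice. If Z is a right ε-invariance on A (i.e., Z ∘ F_w =_ε F_w for all w ∈ Σ*), then Z ∘ Z is also a right ε-invariance on A. -/
variable {L : Type*} [ResiduatedLattice L]

/-- A fuzzy automaton over `L` with state set `Q` and alphabet `S`. -/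
structure FuzzyAutomaton (L : Type*) (Q S : Type*) where
  I : Q → L
  δ : Q → S → Q → L
  F : Q → L

open scoped Classical in
/-- The fuzzy relation `δ_w` of a word `w`. -/
noncomputable def deltaWord {Q S : Type*} (M : FuzzyAutomaton L Q S) :
    List S → Q → Q → L
  | [] => fun p q => if p = q then (1 : L) else ⊥
  | σ :: u => fun p q => ⨆ r, M.δ p σ r * deltaWord M u r q

/-- `F_w := δ_w ∘ F`. -/
noncomputable def Fword {Q S : Type*} (M : FuzzyAutomaton L Q S) (w : List S) : Q → L :=
  fun q => ⨆ p, deltaWord M w q p * M.F p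

/-- `Z` is a right `ε`-invariance on `M`: `Z` is reflexive and `Z ∘ F_w =_ε F_w`
for every word `w`. -/
noncomputable def RightEInv {Q S : Type*} (M : FuzzyAutomaton L Q S) (ε : L)
    (Z : Q → Q → L) : Prop :=
  (∀ q, Z q q = 1) ∧
  ∀ w : List S, ∀ q, eqE ε (⨆ p, Z q p * Fword M w p) (Fword M w q)

/-! Over a linear lattice, `x ≤_ε y` means `x ≤ y ⊔ ε`. Since `⊗` distributes over joins and
`z ⊗ ε ≤ ε`, the inequality `Z ∘ F_w ≤ F_w ⊔ ε` iterates: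
`(Z ∘ Z) ∘ F_w = Z ∘ (Z ∘ F_w) ≤ Z ∘ (F_w ⊔ ε) ≤ (Z ∘ F_w) ⊔ ε ≤ F_w ⊔ ε`.
The reverse inequality `F_w ≤ (Z ∘ Z) ∘ F_w` holds because `Z ∘ Z` is reflexive. -/

namespace ResiduatedLattice

theorem gc_mul_res (y : L) : GaloisConnection (· * y) (res y) :=
  fun x z => adjunction x y z

instance : MulRightMono L :=
  ⟨fun c _ _ h => (gc_mul_res c).monotone_l h⟩

instance : MulLeftMono L :=
  ⟨fun c a b h => by simpa only [mul_comm c] using mul_le_mul_left h c⟩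

theorem iSup_mul {ι : Sort*} (f : ι → L) (a : L) : (⨆ i, f i) * a = ⨆ i, f i * a :=
  (gc_mul_res a).l_iSup

theorem mul_iSup {ι : Sort*} (a : L) (f : ι → L) : a * (⨆ i, f i) = ⨆ i, a * f i := by
  simpa only [mul_comm a] using iSup_mul f a

end ResiduatedLattice

open ResiduatedLattice

/-- The image `r ∘ f` of a fuzzy set `f` under a fuzzy relation `r`. -/
noncomputable def relApply {X Y : Type*} (r : X → Y → L) (f : Y → L) : X → L :=
  fun a => ⨆ b, r a b * f b

section relApply

variable {X : Type*}

theorem relApply_mono {Y : Type*} (r : X → Y → L) {f g : Y → L} (h : f ≤ g) :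
    relApply r f ≤ relApply r g :=
  fun _ => iSup_mono fun b => mul_le_mul_right (h b) _

theorem relApply_relComp (r s : X → X → L) (f : X → L) :
    relApply (relComp r s) f = relApply r (relApply s f) := by
  funext a
  simp only [relApply, relComp, iSup_mul, mul_iSup, mul_assoc]
  exact iSup_comm

theorem relApply_sup_const_le {Y : Type*} (r : X → Y → L) (f : Y → L) (ε : L) (a : X) :
    relApply r (fun b => f b ⊔ ε) a ≤ relApply r f a ⊔ ε :=
  iSup_le fun b => by
    rw [mul_max]
    exact max_le_max (le_iSup (fun b => r a b * f b) b) (mul_le_of_le_one_left' (le_one _))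

theorem le_relApply_of_refl {Z : X → X → L} (hZ : ∀ q, Z q q = 1) (f : X → L) (q : X) :
    f q ≤ relApply Z f q :=
  calc f q = Z q q * f q := by rw [hZ, one_mul]
    _ ≤ relApply Z f q := le_iSup (fun p => Z q p * f p) q

theorem relComp_self_refl {Z : X → X → L} (hZ : ∀ q, Z q q = 1) (q : X) :
    relComp Z Z q q = 1 :=
  le_antisymm (le_one _) (hZ q ▸ le_relApply_of_refl hZ (Z · q) q)

theorem relApply_relComp_self_le {Z : X → X → L} {f : X → L} {ε : L}
    (hZ : ∀ q, relApply Z f q ≤ f q ⊔ ε) (q : X) :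
    relApply (relComp Z Z) f q ≤ f q ⊔ ε :=
  calc relApply (relComp Z Z) f q = relApply Z (relApply Z f) q := by rw [relApply_relComp]
    _ ≤ relApply Z (fun p => f p ⊔ ε) q := relApply_mono Z hZ q
    _ ≤ relApply Z f q ⊔ ε := relApply_sup_const_le Z f ε q
    _ ≤ f q ⊔ ε := by simpa only [sup_assoc, sup_idem] using sup_le_sup_right (hZ q) ε

end relApply

theorem stmt_16 {Q S : Type*} (M : FuzzyAutomaton L Q S) (ε : L) (Z : Q → Q → L)
    (h : RightEInv M ε Z) :
    RightEInv M ε (relComp Z Z) := by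
  obtain ⟨hrefl, hinv⟩ := h
  refine ⟨relComp_self_refl hrefl, fun w q => ⟨?_, Or.inl ?_⟩⟩
  · exact le_sup_iff.mp <| relApply_relComp_self_le (fun p => le_sup_iff.mpr (hinv w p).1) q
  · exact le_relApply_of_refl (relComp_self_refl hrefl) (Fword M w) q
end
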